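/- Let n ≥ 3 and 1 ≤ r ≤ ⌈n/2⌉−1. Let G_0 be a basis of the real subspace C_r^n of H(n). For each k ∈ {2r−1,…,2(n−r)−1}, let A_k, A'_k be totally non-singular real γ(n,k)×r matrices, and set G_k := (ι_k(A_k[0]), ι_k(iA'_k[0]), ι_k(A_k[1]), ι_k(iA'_k[1]), …, ι_k(A_k[r−1]), ι_k(iA'_k[r−1])), where A[l] denotes the l-th column of A. Let G be the concatenation G_0 ∪ G_{2r−1} ∪ G_{2r} ∪ … ∪ G_{2(n−r)−1}. Then the measurement M_G : H(n) → ℝ^{|G|}, X ↦ (tr(G_j X))_j, is r-complete, and |G| = 4r(n−r) + n − 2r. -/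

import Mathlib

/-!
Let `X ⪰ 0` of rank `≤ r` and `X' ⪰ 0` have the same measurements and put `Y = X - X'`.
Since `G₀` spans `C_r^n`, the Hermitian matrix `Y` is trace-orthogonal to `C_r^n`, so it vanishes
on the diagonal and outside the band `2r-1 ≤ i+j ≤ 2(n-r)-1`. If `Y ≠ 0`, let `k` be the first
anti-diagonal carrying a nonzero entry of `Y`; it lies in the band. The measurements along it say
that `A_kᵀ` kills the real parts and `A'_kᵀ` the imaginary parts of the upper half `y` of that
anti-diagonal, so total non-singularity forces `y` to have at least `r + 1` nonzero entries.
Take `r + 1` such rows together with their partner columns: on these indices `Y` has a zero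
top-left block and a lower-triangular invertible top-right block, so `Y` has an isotropic subspace
of half the dimension and hence no nonpositive subspace of dimension `> r + 1`. But `Y = -X' ≤ 0`
on the kernel of the corresponding principal submatrix of `X`, of dimension `≥ r + 2`.

The count is `dim C_r^n = n + 4r(r-1)` plus `2r` outcomes for each of the `2n - 4r + 1`
anti-diagonals of the band.
-/


open Matrix
open scoped ComplexOrder

noncomputable section

noncomputable def measOf {n : ℕ} {ι : Type*} [Fintype ι]
    (G : ι → Matrix (Fin n) (Fin n) ℂ) :
    Matrix (Fin n) (Fin n) ℂ →ₗ[ℝ] EuclideanSpace ℝ ι where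
  toFun X := WithLp.toLp 2 (fun i => ((G i * X).trace).re)
  map_add' X Y := by
    ext i
    simp [Matrix.mul_add]
  map_smul' r X := by
    ext i
    simp [Matrix.mul_smul, Matrix.trace_smul, Complex.real_smul]

def rComplete {n : ℕ} {ι : Type*} [Fintype ι]
    (M : Matrix (Fin n) (Fin n) ℂ →ₗ[ℝ] EuclideanSpace ℝ ι) (r : ℕ) : Prop :=
  ∀ X X' : Matrix (Fin n) (Fin n) ℂ, X.PosSemidef → X.rank ≤ r → X'.PosSemidef →
    X ≠ X' → M X ≠ M X'

/-- The subspace `C_r^n ⊆ H(n)` of Hermitian matrices vanishing at the off-diagonal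
positions `(i,j)` with `2r−1 ≤ i+j ≤ 2(n−r)−1`. -/
def CrnSet (n r : ℕ) : Set (Matrix (Fin n) (Fin n) ℂ) :=
  {X | X.IsHermitian ∧ ∀ i j : Fin n, i ≠ j →
    2 * r - 1 ≤ (i : ℕ) + (j : ℕ) → (i : ℕ) + (j : ℕ) ≤ 2 * (n - r) - 1 → X i j = 0}

/-- A matrix is totally non-singular if every minor (the determinant of every square
submatrix) is nonzero. -/
def TotallyNonSingular {K : Type*} [CommRing K] {a b : ℕ} (A : Matrix (Fin a) (Fin b) K) :
    Prop :=
  ∀ (s : ℕ) (f : Fin s → Fin a) (g : Fin s → Fin b),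
    StrictMono f → StrictMono g → (A.submatrix f g).det ≠ 0

/-- `γ(n,k)`, the length of the upper half of the `k`-th anti-diagonal of an `n×n` matrix:
`⌈k/2⌉` if `k ≤ n−1` and `⌈n−1−k/2⌉` otherwise. -/
def gam (n k : ℕ) : ℕ := if k ≤ n - 1 then (k + 1) / 2 else n - 1 - k / 2

/-- Extension of a finite vector by zero. -/
def pad {m : ℕ} (v : Fin m → ℂ) : ℕ → ℂ := fun i => if h : i < m then v ⟨i, h⟩ else 0

/-- The inclusion `ι_k : ℂ^{γ(n,k)} → H(n)` into the upper half of the `k`-th anti-diagonal: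
`(ι_k(v))_{jl} = v_j/√2` if `j+l = k`, `j < l`; `(ι_k(v))_{jl} = conj(v_l)/√2` if `j+l = k`,
`l < j`; and `0` otherwise.  (The entries of `v` are indexed by the position along the upper
half of the anti-diagonal, whose rows start at `k − (n−1)` when `k > n−1`.) -/
noncomputable def iota (n k : ℕ) (v : Fin (gam n k) → ℂ) : Matrix (Fin n) (Fin n) ℂ :=
  fun j l =>
    if (j : ℕ) + (l : ℕ) = k ∧ (j : ℕ) < (l : ℕ) then
      pad v ((j : ℕ) - (k - (n - 1))) / (Real.sqrt 2 : ℂ)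
    else if (j : ℕ) + (l : ℕ) = k ∧ (l : ℕ) < (j : ℕ) then
      starRingEnd ℂ (pad v ((l : ℕ) - (k - (n - 1)))) / (Real.sqrt 2 : ℂ)
    else 0

open scoped InnerProductSpace
open Module RCLike

section IsotropicBound

variable {𝕜 E : Type*} [RCLike 𝕜] [NormedAddCommGroup E] [InnerProductSpace 𝕜 E]
  {T : E →ₗ[𝕜] E} {S : Submodule 𝕜 E}

theorem LinearMap.IsSymmetric.re_inner_map_eq_zero_of_nonpos (hT : T.IsSymmetric)
    (hS : ∀ s ∈ S, re ⟪s, T s⟫_𝕜 ≤ 0) {u s : E} (hu : u ∈ S) (huu : ⟪u, T u⟫_𝕜 = 0)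
    (hs : s ∈ S) : re ⟪u, T s⟫_𝕜 = 0 := by
  -- Along the line `s + x • u` the form is affine in `x` and bounded above, so its slope vanishes.
  have hline : ∀ x : ℝ, re ⟪s, T s⟫_𝕜 + 2 * x * re ⟪u, T s⟫_𝕜 ≤ 0 := by
    intro x
    have h := hS _ (S.add_mem hs (S.smul_mem (x : 𝕜) hu))
    have hsym : re ⟪s, T u⟫_𝕜 = re ⟪u, T s⟫_𝕜 := by rw [← hT s u, inner_re_symm]
    simp only [map_add, map_smul, inner_add_left, inner_add_right, inner_smul_left,
      inner_smul_right, huu, conj_ofReal, re_ofReal_mul, mul_zero, add_zero, hsym] at h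
    linarith
  by_contra h
  have := hline ((1 - re ⟪s, T s⟫_𝕜) / (2 * re ⟪u, T s⟫_𝕜))
  field_simp at this
  linarith

theorem LinearMap.IsSymmetric.inner_map_eq_zero_of_nonpos (hT : T.IsSymmetric)
    (hS : ∀ s ∈ S, re ⟪s, T s⟫_𝕜 ≤ 0) {u s : E} (hu : u ∈ S) (huu : ⟪u, T u⟫_𝕜 = 0)
    (hs : s ∈ S) : ⟪u, T s⟫_𝕜 = 0 := by
  have h := hT.re_inner_map_eq_zero_of_nonpos hS hu huu
    (S.smul_mem (starRingEnd 𝕜 ⟪u, T s⟫_𝕜) hs)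
  rw [map_smul, inner_smul_right, RCLike.conj_mul] at h
  norm_cast at h
  simpa using h

theorem LinearMap.IsSymmetric.finrank_add_finrank_le_of_isOrtho [FiniteDimensional 𝕜 E]
    (hT : T.IsSymmetric) (hTinj : Function.Injective T) (hS : ∀ s ∈ S, re ⟪s, T s⟫_𝕜 ≤ 0)
    {P : Submodule 𝕜 E} (hP : P ⟂ P.map T) :
    finrank 𝕜 S + finrank 𝕜 P ≤ finrank 𝕜 E := by
  have hiso : ∀ u ∈ P, ∀ w ∈ P, ⟪u, T w⟫_𝕜 = 0 := fun u hu w hw =>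
    Submodule.isOrtho_iff_inner_eq.1 hP u hu (T w) ⟨w, hw, rfl⟩
  have hW : (S ⊔ P).map T ≤ (S ⊓ P)ᗮ := by
    rintro _ ⟨v, hv, rfl⟩
    obtain ⟨s, hs, p, hp, rfl⟩ := Submodule.mem_sup.1 hv
    refine (Submodule.mem_orthogonal _ _).2 fun u hu => ?_
    rw [map_add, inner_add_right, hiso u hu.2 p hp, add_zero]
    exact hT.inner_map_eq_zero_of_nonpos hS hu.1 (hiso u hu.2 u hu.2) hs
  have h₁ := Submodule.finrank_mono hW
  rw [(Submodule.equivMapOfInjective T hTinj _).finrank_eq.symm] at h₁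
  have h₂ := (S ⊓ P).finrank_add_finrank_orthogonal
  have h₃ := Submodule.finrank_sup_add_finrank_inf_eq S P
  omega

end IsotropicBound

theorem Matrix.IsHermitian.toBlocks₂₁_eq {α m : Type*} [Star α]
    {B : Matrix (m ⊕ m) (m ⊕ m) α} (hB : B.IsHermitian) : B.toBlocks₂₁ = B.toBlocks₁₂ᴴ := by
  ext i j
  exact (hB.apply _ _).symm

section Blocks

variable {𝕜 ι : Type*} [RCLike 𝕜] [Fintype ι] [DecidableEq ι]
  {B : Matrix (ι ⊕ ι) (ι ⊕ ι) 𝕜}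

theorem Matrix.IsHermitian.eq_zero_of_mulVec_eq_zero_of_toBlocks₁₁_eq_zero
    (hB : B.IsHermitian) (h₁₁ : B.toBlocks₁₁ = 0) (h₁₂ : B.toBlocks₁₂.det ≠ 0)
    {v : ι ⊕ ι → 𝕜} (hv : B *ᵥ v = 0) : v = 0 := by
  rw [← fromBlocks_toBlocks B, fromBlocks_mulVec, h₁₁, hB.toBlocks₂₁_eq, zero_mulVec,
    zero_add] at hv
  have hr : v ∘ Sum.inr = 0 := eq_zero_of_mulVec_eq_zero h₁₂ <| funext fun i => by
    simpa using congrFun hv (Sum.inl i)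
  have hl : v ∘ Sum.inl = 0 := by
    refine eq_zero_of_mulVec_eq_zero (by rwa [det_conjTranspose, star_ne_zero]) ?_
    funext i
    simpa [hr] using congrFun hv (Sum.inr i)
  funext i
  cases i with
  | inl i => exact congrFun hl i
  | inr i => exact congrFun hr i

theorem Matrix.IsHermitian.finrank_le_card_of_toBlocks₁₁_eq_zero (hB : B.IsHermitian)
    (h₁₁ : B.toBlocks₁₁ = 0) (h₁₂ : B.toBlocks₁₂.det ≠ 0)
    {S : Submodule 𝕜 (EuclideanSpace 𝕜 (ι ⊕ ι))}
    (hS : ∀ s ∈ S, re ⟪s, toEuclideanLin B s⟫_𝕜 ≤ 0) :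
    finrank 𝕜 S ≤ Fintype.card ι := by
  let e := (EuclideanSpace.basisFun (ι ⊕ ι) 𝕜).toBasis
  set P := Submodule.span 𝕜 (Set.range (e ∘ Sum.inl))
  have hP : P ⟂ P.map (toEuclideanLin B) := by
    rw [Submodule.map_span, ← Set.range_comp, Submodule.isOrtho_span]
    rintro _ ⟨i, rfl⟩ _ ⟨j, rfl⟩
    have hij : B (Sum.inl i) (Sum.inl j) = 0 := congrFun (congrFun h₁₁ i) j
    simp [e, EuclideanSpace.inner_single_left, hij]
  have hPrank : finrank 𝕜 P = Fintype.card ι :=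
    finrank_span_eq_card (e.linearIndependent.comp Sum.inl Sum.inl_injective)
  have hinj : Function.Injective (toEuclideanLin B) := by
    refine (injective_iff_map_eq_zero _).2 fun x hx => WithLp.ofLp_injective 2 ?_
    exact hB.eq_zero_of_mulVec_eq_zero_of_toBlocks₁₁_eq_zero h₁₁ h₁₂ (congrArg WithLp.ofLp hx)
  have := (isSymmetric_toEuclideanLin_iff.2 hB).finrank_add_finrank_le_of_isOrtho hinj hS hP
  rw [hPrank, finrank_euclideanSpace, Fintype.card_sum] at this
  omega

end Blocks

section RankBound

variable {𝕜 : Type*} [RCLike 𝕜]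

theorem Matrix.card_le_rank_of_toBlocks_submatrix_sub {m κ : Type*} [Fintype m]
    [Fintype κ] [DecidableEq κ] {X X' : Matrix m m 𝕜} (hX : X.IsHermitian)
    (hX' : X'.PosSemidef) (a : κ ⊕ κ → m) (h₁₁ : ((X - X').submatrix a a).toBlocks₁₁ = 0)
    (h₁₂ : ((X - X').submatrix a a).toBlocks₁₂.det ≠ 0) :
    Fintype.card κ ≤ X.rank := by
  have hK : ∀ s ∈ LinearMap.ker (toEuclideanLin (X.submatrix a a)),
      re ⟪s, toEuclideanLin ((X - X').submatrix a a) s⟫_𝕜 ≤ 0 := by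
    intro s hs
    rw [show (X - X').submatrix a a = X.submatrix a a - X'.submatrix a a from rfl, map_sub,
      LinearMap.sub_apply, LinearMap.mem_ker.1 hs, zero_sub, inner_neg_right, map_neg, neg_nonpos]
    exact (isPositive_toEuclideanLin_iff.2 (hX'.submatrix a)).re_inner_nonneg_right s
  have hKle := ((hX.sub hX'.1).submatrix a).finrank_le_card_of_toBlocks₁₁_eq_zero h₁₁ h₁₂ hK
  have hrank := LinearMap.finrank_range_add_finrank_ker (toEuclideanLin (X.submatrix a a))
  have hr : (X.submatrix a a).rank =
      finrank 𝕜 (LinearMap.range (toEuclideanLin (X.submatrix a a))) :=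
    rank_eq_finrank_range_toLin _ (EuclideanSpace.basisFun _ 𝕜).toBasis
      (EuclideanSpace.basisFun _ 𝕜).toBasis
  rw [finrank_euclideanSpace, Fintype.card_sum, ← hr] at hrank
  have := rank_submatrix_le X a a
  omega

theorem Matrix.card_le_rank_of_antidiagonal {n : ℕ} {κ : Type*} [Fintype κ] [LinearOrder κ]
    {X X' : Matrix (Fin n) (Fin n) 𝕜} (hX : X.IsHermitian)
    (hX' : X'.PosSemidef) {k : ℕ} (hmin : ∀ p q : Fin n, (p : ℕ) + q < k → (X - X') p q = 0)
    {f g : κ → Fin n} (hf : StrictMono f) (hfg : ∀ t, (f t : ℕ) + g t = k)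
    (hlt : ∀ t, f t < g t) (hne : ∀ t, (X - X') (f t) (g t) ≠ 0) :
    Fintype.card κ ≤ X.rank := by
  -- Indexing rows and columns by `f` then `g`, the top-left block of `X - X'` lies above the
  -- `k`-th anti-diagonal and the top-right block is lower triangular with the entries
  -- `(f t, g t)` on its diagonal.
  refine card_le_rank_of_toBlocks_submatrix_sub hX hX' (Sum.elim f g) ?_ ?_
  · ext s t
    have := hfg s; have := hfg t
    have := Fin.lt_def.1 (hlt s); have := Fin.lt_def.1 (hlt t)
    exact hmin (f s) (f t) (by omega)
  · rw [det_of_isLowerTriangular]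
    · exact Finset.prod_ne_zero_iff.2 fun t _ => hne t
    · intro s t (hst : s < t)
      have := Fin.lt_def.1 (hf hst); have := hfg t
      exact hmin (f s) (g t) (by omega)

end RankBound

theorem TotallyNonSingular.lt_card_support {K : Type*} [CommRing K] [NoZeroDivisors K]
    [DecidableEq K] {a b : ℕ} {A : Matrix (Fin a) (Fin b) K} (hA : TotallyNonSingular A)
    {x : Fin a → K} (hx : x ᵥ* A = 0) (hx₀ : x ≠ 0) :
    b < (Finset.univ.filter fun j => x j ≠ 0).card := by
  set F := Finset.univ.filter fun j => x j ≠ 0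
  by_contra! hFb
  let f := F.orderEmbOfFin rfl
  have hsum : ∀ c, ∑ t, x (f t) * A (f t) c = ∑ j, x j * A j c := fun c => by
    refine (Finset.sum_map Finset.univ f.toEmbedding (fun j => x j * A j c)).symm.trans ?_
    rw [F.map_orderEmbOfFin_univ]
    exact Finset.sum_subset (Finset.subset_univ F) fun j _ hj => by simp_all [F]
  have hsub : (x ∘ f) ᵥ* A.submatrix f (Fin.castLE hFb) = 0 := funext fun l => by
    simpa [vecMul, dotProduct, hsum] using congrFun hx (Fin.castLE hFb l)
  have hxf :=
    eq_zero_of_vecMul_eq_zero (hA _ f _ f.strictMono (Fin.strictMono_castLE hFb)) hsub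
  obtain ⟨j, hj⟩ := Function.ne_iff.1 hx₀
  obtain ⟨t, rfl⟩ : j ∈ Set.range f := by simpa [f, F] using hj
  exact hj (congrFun hxf t)

section ZeroPattern

variable {ι : Type*} {Z : ι → ι → Prop}

def Matrix.hermitianWithZeros (Z : ι → ι → Prop) : Submodule ℝ (Matrix ι ι ℂ) where
  carrier := {X | X.IsHermitian ∧ ∀ i j, Z i j → X i j = 0}
  add_mem' hX hY := ⟨hX.1.add hY.1, fun i j h => by simp [hX.2 i j h, hY.2 i j h]⟩
  zero_mem' := ⟨isHermitian_zero, fun _ _ _ => rfl⟩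
  smul_mem' c _ hX := ⟨hX.1.smul (IsSelfAdjoint.all c), fun i j h => by simp [hX.2 i j h]⟩

theorem Matrix.IsHermitian.eq_zero_of_re_trace_mul_eq_zero [Fintype ι]
    (hZ : ∀ i j, Z i j → Z j i) {Y : Matrix ι ι ℂ} (hY : Y.IsHermitian)
    (h : ∀ C ∈ hermitianWithZeros Z, (C * Y).trace.re = 0) {i j : ι} (hij : ¬ Z i j) :
    Y i j = 0 := by
  classical
  -- Testing against `Y` with its entries on `Z` erased gives `∑_{¬ Z a b} |Y a b|² = 0`.
  let C : Matrix ι ι ℂ := of fun a b => if Z a b then 0 else Y a b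
  have hC : C ∈ hermitianWithZeros Z := by
    refine ⟨?_, fun a b hab => by simp [C, hab]⟩
    ext a b
    simp only [C, conjTranspose_apply, of_apply, show Z b a ↔ Z a b from ⟨hZ b a, hZ a b⟩]
    split_ifs <;> simp [hY.apply]
  have hterm : ∀ a b, (C a b * Y b a).re = if Z a b then 0 else Complex.normSq (Y a b) := by
    intro a b
    simp only [C, of_apply]
    split_ifs
    · simp
    · rw [← hY.apply b a, Complex.star_def, Complex.mul_conj, Complex.ofReal_re]
  have hsum := h C hC
  simp only [trace, diag, mul_apply, Complex.re_sum, hterm] at hsum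
  rw [← Fintype.sum_prod_type', Finset.sum_eq_zero_iff_of_nonneg fun p _ => by
    split_ifs <;> simp [Complex.normSq_nonneg]] at hsum
  simpa [hij] using hsum (i, j) (Finset.mem_univ _)

variable [LinearOrder ι]

def Matrix.hermitianWithZerosParams (Z : ι → ι → Prop) :
    hermitianWithZeros Z →ₗ[ℝ] (ι → ℝ) × ({p : ι × ι // p.1 < p.2 ∧ ¬ Z p.1 p.2} → ℂ) where
  toFun X := (fun i => (X.1 i i).re, fun p => X.1 p.1.1 p.1.2)
  map_add' X Y := by ext <;> simp
  map_smul' c X := by ext <;> simp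

theorem Matrix.hermitianWithZerosParams_injective :
    Function.Injective (hermitianWithZerosParams Z) := by
  refine (injective_iff_map_eq_zero _).2 fun ⟨X, hXh, hXZ⟩ hX => Subtype.ext ?_
  have hup : ∀ i j, i < j → X i j = 0 := fun i j hij => by
    by_cases hz : Z i j
    · exact hXZ i j hz
    · exact congrFun (congrArg Prod.snd hX) ⟨(i, j), hij, hz⟩
  change X = 0
  ext i j
  rcases lt_trichotomy i j with hij | rfl | hij
  · exact hup i j hij
  · rw [← hXh.coe_re_apply_self]
    simpa [hermitianWithZerosParams] using congrFun (congrArg Prod.fst hX) i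
  · rw [← hXh.apply, hup j i hij, star_zero]
    rfl

theorem Matrix.hermitianWithZerosParams_surjective (hZ : ∀ i j, Z i j → Z j i)
    (hZ' : ∀ i, ¬ Z i i) : Function.Surjective (hermitianWithZerosParams Z) := by
  classical
  rintro ⟨d, z⟩
  let X : Matrix ι ι ℂ := of fun i j =>
    if h : i < j ∧ ¬ Z i j then z ⟨(i, j), h⟩
    else if h : j < i ∧ ¬ Z j i then star (z ⟨(j, i), h⟩)
    else if i = j then (d i : ℂ) else 0
  have hX : X ∈ hermitianWithZeros Z := by
    refine ⟨?_, fun i j hij => ?_⟩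
    · ext i j
      rcases lt_trichotomy i j with h | rfl | h
      · by_cases hz : Z i j
        · simp [X, h, h.not_gt, h.ne, h.ne', hz, hZ i j hz]
        · simp [X, h, h.not_gt, hz]
      · simp [X]
      · by_cases hz : Z j i
        · simp [X, h, h.not_gt, h.ne, h.ne', hz, hZ j i hz]
        · simp [X, h, h.not_gt, hz]
    · simp only [X, of_apply, hij, hZ i j hij, not_true, and_false, dite_false]
      split_ifs with h
      · exact absurd hij (h ▸ hZ' j)
      · rfl
  refine ⟨⟨X, hX⟩, Prod.ext (funext fun i => by simp [hermitianWithZerosParams, X]) ?_⟩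
  funext ⟨⟨i, j⟩, hij⟩
  simp [hermitianWithZerosParams, X, hij]

theorem Matrix.finrank_hermitianWithZeros [Fintype ι] (hZ : ∀ i j, Z i j → Z j i)
    (hZ' : ∀ i, ¬ Z i i) :
    finrank ℝ (hermitianWithZeros Z) =
      Fintype.card ι + 2 * Nat.card {p : ι × ι // p.1 < p.2 ∧ ¬ Z p.1 p.2} := by
  classical
  rw [(LinearEquiv.ofBijective _ ⟨hermitianWithZerosParams_injective,
    hermitianWithZerosParams_surjective hZ hZ'⟩).finrank_eq, finrank_prod,
    finrank_fintype_fun_eq_card, finrank_pi_fintype, Nat.card_eq_fintype_card]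
  simp [mul_comm]

end ZeroPattern

section Antidiagonal

variable {n k : ℕ}

theorem lt_and_two_mul_lt_of_lt_gam {i : ℕ} (hi : i < gam n k) :
    k - (n - 1) + i < n ∧ 2 * (k - (n - 1) + i) < k := by
  unfold gam at hi
  split_ifs at hi <;> omega

/-- The `i`-th entry of the upper half of the `k`-th anti-diagonal sits at
`(antidiagRow n k i, antidiagCol n k i)`; rows start at `k - (n - 1)`, as in `iota`. -/
def antidiagRow (n k : ℕ) (i : Fin (gam n k)) : Fin n :=
  ⟨k - (n - 1) + i, (lt_and_two_mul_lt_of_lt_gam i.2).1⟩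

def antidiagCol (n k : ℕ) (i : Fin (gam n k)) : Fin n :=
  ⟨k - (k - (n - 1) + i), by have := lt_and_two_mul_lt_of_lt_gam i.2; omega⟩

theorem antidiagRow_add_antidiagCol (i : Fin (gam n k)) :
    (antidiagRow n k i : ℕ) + antidiagCol n k i = k := by
  have := lt_and_two_mul_lt_of_lt_gam i.2
  simp only [antidiagRow, antidiagCol]
  omega

theorem antidiagRow_lt_antidiagCol (i : Fin (gam n k)) :
    antidiagRow n k i < antidiagCol n k i := by
  have := lt_and_two_mul_lt_of_lt_gam i.2
  simp only [antidiagRow, antidiagCol, Fin.mk_lt_mk]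
  omega

theorem strictMono_antidiagRow : StrictMono (antidiagRow n k) := fun i j hij => by
  simp only [antidiagRow, Fin.lt_def] at hij ⊢
  omega

theorem exists_antidiagRow_eq {p q : Fin n} (hpq : p < q) (hk : (p : ℕ) + q = k) :
    ∃ i, antidiagRow n k i = p ∧ antidiagCol n k i = q := by
  have hq := q.2
  rw [Fin.lt_def] at hpq
  have hi : (p : ℕ) - (k - (n - 1)) < gam n k := by
    unfold gam
    split_ifs <;> omega
  exact ⟨⟨_, hi⟩, Fin.ext (by simp only [antidiagRow]; omega),
    Fin.ext (by simp only [antidiagCol]; omega)⟩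

theorem iota_antidiagRow_antidiagCol (v : Fin (gam n k) → ℂ) (i : Fin (gam n k)) :
    iota n k v (antidiagRow n k i) (antidiagCol n k i) = v i / (Real.sqrt 2 : ℂ) := by
  rw [iota, if_pos ⟨antidiagRow_add_antidiagCol i, antidiagRow_lt_antidiagCol i⟩]
  simp [antidiagRow, pad]

theorem iota_antidiagCol_antidiagRow (v : Fin (gam n k) → ℂ) (i : Fin (gam n k)) :
    iota n k v (antidiagCol n k i) (antidiagRow n k i) =
      starRingEnd ℂ (v i) / (Real.sqrt 2 : ℂ) := by
  have h := antidiagRow_lt_antidiagCol i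
  rw [iota, if_neg (by omega), if_pos ⟨by rw [add_comm, antidiagRow_add_antidiagCol], h⟩]
  simp [antidiagRow, pad]

theorem mem_range_of_iota_ne_zero {v : Fin (gam n k) → ℂ} {p q : Fin n}
    (h : iota n k v p q ≠ 0) :
    (p, q) ∈ Set.range (Sum.elim (fun i => (antidiagRow n k i, antidiagCol n k i))
      (fun i => (antidiagCol n k i, antidiagRow n k i))) := by
  have hk : (p : ℕ) + q = k := by
    by_contra hk
    simp [iota, hk] at h
  rcases lt_trichotomy p q with hpq | rfl | hpq
  · obtain ⟨i, rfl, rfl⟩ := exists_antidiagRow_eq hpq hk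
    exact ⟨Sum.inl i, rfl⟩
  · simp [iota] at h
  · obtain ⟨i, rfl, rfl⟩ := exists_antidiagRow_eq (k := k) hpq (by omega)
    exact ⟨Sum.inr i, rfl⟩

theorem trace_iota_mul (v : Fin (gam n k) → ℂ) (Y : Matrix (Fin n) (Fin n) ℂ) :
    (iota n k v * Y).trace = ∑ i, (v i * Y (antidiagCol n k i) (antidiagRow n k i) +
      starRingEnd ℂ (v i) * Y (antidiagRow n k i) (antidiagCol n k i)) / (Real.sqrt 2 : ℂ) := by
  have hinj : Function.Injective (Sum.elim (fun i => (antidiagRow n k i, antidiagCol n k i))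
      (fun i => (antidiagCol n k i, antidiagRow n k i))) := by
    refine Function.Injective.sumElim (fun i j h => strictMono_antidiagRow.injective
      (congrArg Prod.fst h)) (fun i j h => strictMono_antidiagRow.injective
      (congrArg Prod.snd h)) fun i j h => ?_
    have hi := antidiagRow_lt_antidiagCol i
    have hj := antidiagRow_lt_antidiagCol j
    simp only [Prod.mk.injEq, Fin.ext_iff] at h
    rw [Fin.lt_def] at hi hj
    omega
  change ∑ p, ∑ q, iota n k v p q * Y q p = _
  rw [← Fintype.sum_prod_type' (fun p q => iota n k v p q * Y q p),
    ← Fintype.sum_of_injective _ hinj _ (fun x => iota n k v x.1 x.2 * Y x.2 x.1)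
      (fun x hx => by_contra fun h => hx (mem_range_of_iota_ne_zero (left_ne_zero_of_mul h)))
      (fun _ => rfl)]
  simp only [Fintype.sum_sum_type, Sum.elim_inl, Sum.elim_inr, iota_antidiagRow_antidiagCol,
    iota_antidiagCol_antidiagRow, ← Finset.sum_add_distrib, add_div]
  congr 1
  funext i
  ring

theorem re_trace_iota_mul {Y : Matrix (Fin n) (Fin n) ℂ} (hY : Y.IsHermitian)
    (v : Fin (gam n k) → ℂ) :
    (iota n k v * Y).trace.re = √2 *
      ∑ i, (starRingEnd ℂ (v i) * Y (antidiagRow n k i) (antidiagCol n k i)).re := by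
  rw [trace_iota_mul, Complex.re_sum, Finset.mul_sum]
  refine Finset.sum_congr rfl fun i _ => ?_
  rw [← hY.apply, Complex.div_ofReal_re, Complex.add_re, Complex.star_def,
    ← Complex.conj_re (v i * _), map_mul, Complex.conj_conj, mul_comm (starRingEnd ℂ (v i)),
    ← two_mul, mul_div_right_comm, Real.div_sqrt]

theorem vecMul_re_antidiag_eq_zero {b : ℕ} {Y : Matrix (Fin n) (Fin n) ℂ}
    (hY : Y.IsHermitian) {A : Matrix (Fin (gam n k)) (Fin b) ℝ}
    (h : ∀ l, (iota n k (fun j => (A j l : ℂ)) * Y).trace.re = 0) :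
    (fun i => (Y (antidiagRow n k i) (antidiagCol n k i)).re) ᵥ* A = 0 := funext fun l => by
  have := h l
  rw [re_trace_iota_mul hY] at this
  simpa [vecMul, dotProduct, mul_comm] using this

theorem vecMul_im_antidiag_eq_zero {b : ℕ} {Y : Matrix (Fin n) (Fin n) ℂ}
    (hY : Y.IsHermitian) {A : Matrix (Fin (gam n k)) (Fin b) ℝ}
    (h : ∀ l, (iota n k (fun j => Complex.I * (A j l : ℂ)) * Y).trace.re = 0) :
    (fun i => (Y (antidiagRow n k i) (antidiagCol n k i)).im) ᵥ* A = 0 := funext fun l => by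
  have := h l
  rw [re_trace_iota_mul hY] at this
  simpa [vecMul, dotProduct, mul_comm] using this

theorem card_support_antidiag_le_rank {X X' : Matrix (Fin n) (Fin n) ℂ}
    (hX : X.IsHermitian) (hX' : X'.PosSemidef)
    (hmin : ∀ p q : Fin n, (p : ℕ) + q < k → (X - X') p q = 0) :
    (Finset.univ.filter fun i => (X - X') (antidiagRow n k i) (antidiagCol n k i) ≠ 0).card ≤
      X.rank := by
  set F := Finset.univ.filter fun i => (X - X') (antidiagRow n k i) (antidiagCol n k i) ≠ 0
  simpa using card_le_rank_of_antidiagonal hX hX' hmin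
    (strictMono_antidiagRow.comp (F.orderEmbOfFin rfl).strictMono)
    (fun t => antidiagRow_add_antidiagCol _) (fun t => antidiagRow_lt_antidiagCol _)
    (fun t => (Finset.mem_filter.1 (F.orderEmbOfFin_mem rfl t)).2)

end Antidiagonal

section Counting

open Finset

theorem card_filter_antidiag_upper (n k : ℕ) :
    #{p : Fin n × Fin n | p.1 < p.2 ∧ (p.1 : ℕ) + p.2 = k} = gam n k := by
  rw [← Fintype.card_fin (gam n k), ← card_univ]
  symm
  refine card_bij (fun i _ => (antidiagRow n k i, antidiagCol n k i)) (fun i _ => ?_)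
    (fun i _ j _ h => strictMono_antidiagRow.injective (congrArg Prod.fst h)) fun p hp => ?_
  · simp [antidiagRow_lt_antidiagCol, antidiagRow_add_antidiagCol]
  · simp only [mem_filter, mem_univ, true_and] at hp
    obtain ⟨i, hi, hi'⟩ := exists_antidiagRow_eq hp.1 hp.2
    exact ⟨i, mem_univ _, Prod.ext hi hi'⟩

theorem card_filter_lt_add_lt {n c : ℕ} (hc : c ≤ n) :
    #{p : Fin n × Fin n | p.1 < p.2 ∧ (p.1 : ℕ) + p.2 < c} = ∑ s ∈ range c, (s + 1) / 2 := by
  rw [card_eq_sum_card_fiberwise (f := fun p : Fin n × Fin n => (p.1 : ℕ) + p.2) (t := range c)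
    (fun p hp => by simpa using (mem_filter.1 hp).2.2)]
  refine sum_congr rfl fun s hs => ?_
  rw [mem_range] at hs
  rw [filter_filter, show (s + 1) / 2 = gam n s by rw [gam, if_pos (by omega)],
    ← card_filter_antidiag_upper]
  congr 1
  exact filter_congr fun p _ => by omega

theorem sum_range_succ_div_two (r : ℕ) :
    ∑ s ∈ range (2 * r - 1), (s + 1) / 2 = r * (r - 1) := by
  obtain _ | r := r
  · simp
  · rw [show 2 * (r + 1) - 1 = 2 * r + 1 by omega, Nat.add_sub_cancel]
    induction r with
    | zero => simp
    | succ r ih =>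
      rw [show 2 * (r + 1) + 1 = 2 * r + 1 + 1 + 1 by ring, sum_range_succ, sum_range_succ, ih,
        show (2 * r + 1 + 1) / 2 = r + 1 by omega, show (2 * r + 1 + 1 + 1) / 2 = r + 1 by omega]
      ring

theorem card_filter_lt_add_gt {n r : ℕ} (hr : 2 * r ≤ n) :
    #{p : Fin n × Fin n | p.1 < p.2 ∧ 2 * (n - r) - 1 < (p.1 : ℕ) + p.2} =
      #{p : Fin n × Fin n | p.1 < p.2 ∧ (p.1 : ℕ) + p.2 < 2 * r - 1} := by
  refine card_nbij' (fun p => (p.2.rev, p.1.rev)) (fun p => (p.2.rev, p.1.rev)) ?_ ?_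
    (fun p _ => by simp) (fun p _ => by simp)
  all_goals
    intro p
    have := p.1.2
    have := p.2.2
    simp only [coe_filter, Set.mem_ofPred_eq, mem_univ, true_and, Fin.lt_def, Fin.val_rev]
    omega

end Counting

section Band

variable {n r : ℕ}

def InBand (n r : ℕ) (i j : Fin n) : Prop :=
  i ≠ j ∧ 2 * r - 1 ≤ (i : ℕ) + j ∧ (i : ℕ) + j ≤ 2 * (n - r) - 1

theorem coe_hermitianWithZeros_inBand (n r : ℕ) :
    (hermitianWithZeros (InBand n r) : Set (Matrix (Fin n) (Fin n) ℂ)) = CrnSet n r := by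
  ext X
  simp [hermitianWithZeros, CrnSet, InBand, and_imp]

theorem InBand.symm {i j : Fin n} : InBand n r i j → InBand n r j i := by
  simp only [InBand]
  omega

theorem span_eq_hermitianWithZeros_inBand {ι : Type*} {G : ι → Matrix (Fin n) (Fin n) ℂ}
    (hmem : ∀ i, G i ∈ CrnSet n r)
    (hspan : ∀ X ∈ CrnSet n r, X ∈ Submodule.span ℝ (Set.range G)) :
    Submodule.span ℝ (Set.range G) = hermitianWithZeros (InBand n r) := by
  have hC := coe_hermitianWithZeros_inBand n r
  refine le_antisymm (Submodule.span_le.2 ?_) fun X hX => hspan X (hC ▸ hX)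
  rintro _ ⟨i, rfl⟩
  exact hC ▸ hmem i

theorem card_upper_not_inBand (hr : 2 * r ≤ n) :
    Nat.card {p : Fin n × Fin n // p.1 < p.2 ∧ ¬ InBand n r p.1 p.2} = 2 * (r * (r - 1)) := by
  classical
  set low := Finset.univ.filter
    fun p : Fin n × Fin n => p.1 < p.2 ∧ (p.1 : ℕ) + p.2 < 2 * r - 1
  set high := Finset.univ.filter
    fun p : Fin n × Fin n => p.1 < p.2 ∧ 2 * (n - r) - 1 < (p.1 : ℕ) + p.2
  have hsplit : Finset.univ.filter (fun p : Fin n × Fin n => p.1 < p.2 ∧ ¬ InBand n r p.1 p.2) =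
      low ∪ high := by
    ext p
    simp only [low, high, Finset.mem_filter, Finset.mem_union, Finset.mem_univ, true_and,
      InBand, Fin.lt_def, ne_eq, Fin.ext_iff]
    omega
  have hdisj : Disjoint low high := by
    rw [Finset.disjoint_filter]
    omega
  rw [Nat.card_eq_fintype_card, Fintype.card_subtype, hsplit, Finset.card_union_of_disjoint hdisj,
    card_filter_lt_add_gt hr, card_filter_lt_add_lt (by omega), sum_range_succ_div_two]
  ring

theorem card_measurement_index {ι₀ : Type*} [Fintype ι₀] (hr : 2 * r ≤ n)
    (h : Fintype.card ι₀ = finrank ℝ (hermitianWithZeros (InBand n r))) :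
    Fintype.card (ι₀ ⊕ Fin (2 * n - 4 * r + 1) × Fin r × Bool) =
      4 * r * (n - r) + n - 2 * r := by
  rw [finrank_hermitianWithZeros (fun _ _ => InBand.symm) (fun _ h => h.1 rfl),
    card_upper_not_inBand hr] at h
  simp only [Fintype.card_sum, Fintype.card_prod, Fintype.card_fin, Fintype.card_bool, h]
  obtain ⟨d, rfl⟩ : ∃ d, n = 2 * r + d := ⟨n - 2 * r, by omega⟩
  rcases r with _ | r
  · simp
  · rw [show 2 * (2 * (r + 1) + d) - 4 * (r + 1) + 1 = 2 * d + 1 by omega,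
      show 2 * (r + 1) + d - (r + 1) = r + 1 + d by omega, Nat.add_sub_cancel,
      Nat.add_sub_assoc (by omega), Nat.add_sub_cancel_left]
    ring

theorem exists_first_antidiag_inBand {Y : Matrix (Fin n) (Fin n) ℂ} (hY : Y.IsHermitian)
    (hY₀ : Y ≠ 0) (hband : ∀ i j, ¬ InBand n r i j → Y i j = 0) :
    ∃ k, 2 * r - 1 ≤ k ∧ k ≤ 2 * (n - r) - 1 ∧ (∀ p q : Fin n, (p : ℕ) + q < k → Y p q = 0) ∧
      ∃ i, Y (antidiagRow n k i) (antidiagCol n k i) ≠ 0 := by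
  classical
  have hex : ∃ k, ∃ p q : Fin n, (p : ℕ) + q = k ∧ Y p q ≠ 0 := by
    by_contra! h
    exact hY₀ (Matrix.ext fun p q => h _ p q rfl)
  obtain ⟨p, q, hk, hpq⟩ := Nat.find_spec hex
  have hb : InBand n r p q := by_contra fun hb => hpq (hband p q hb)
  refine ⟨Nat.find hex, by simp only [InBand] at hb; omega, by simp only [InBand] at hb; omega,
    fun p q h => by_contra fun h' => Nat.find_min hex h ⟨p, q, rfl, h'⟩, ?_⟩
  rcases hb.1.lt_or_gt with h | h
  · obtain ⟨i, rfl, rfl⟩ := exists_antidiagRow_eq h hk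
    exact ⟨i, hpq⟩
  · obtain ⟨i, rfl, rfl⟩ := exists_antidiagRow_eq (k := Nat.find hex) h (by omega)
    exact ⟨i, fun h0 => hpq (by rw [← hY.apply, h0, star_zero])⟩

end Band

theorem lt_card_support_of_vecMul_re_im {a b : ℕ} {A A' : Matrix (Fin a) (Fin b) ℝ}
    (hA : TotallyNonSingular A) (hA' : TotallyNonSingular A') {y : Fin a → ℂ} (hy : y ≠ 0)
    (hre : (fun i => (y i).re) ᵥ* A = 0) (him : (fun i => (y i).im) ᵥ* A' = 0) :
    b < (Finset.univ.filter fun i => y i ≠ 0).card := by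
  have hsub : ∀ f : ℂ → ℝ, f 0 = 0 → (Finset.univ.filter fun i => f (y i) ≠ 0) ⊆
      Finset.univ.filter fun i => y i ≠ 0 := fun f hf i => by
    simp only [Finset.mem_filter, Finset.mem_univ, true_and]
    exact fun hi h0 => hi (by rw [h0, hf])
  by_cases h : (fun i => (y i).re) = 0
  · have him₀ : (fun i => (y i).im) ≠ 0 := fun h' =>
      hy (funext fun i => Complex.ext (congrFun h i) (congrFun h' i))
    exact (hA'.lt_card_support him him₀).trans_le (Finset.card_le_card (hsub _ rfl))
  · exact (hA.lt_card_support hre h).trans_le (Finset.card_le_card (hsub _ rfl))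

theorem re_trace_mul_eq_zero_of_mem_span {ι : Type*} [Fintype ι] {s : Set (Matrix ι ι ℂ)}
    {Y : Matrix ι ι ℂ} (h : ∀ C ∈ s, (C * Y).trace.re = 0) {C : Matrix ι ι ℂ}
    (hC : C ∈ Submodule.span ℝ s) : (C * Y).trace.re = 0 := by
  induction hC using Submodule.span_induction with
  | mem C hC => exact h C hC
  | zero => simp
  | add C D _ _ hC hD => simp [add_mul, hC, hD]
  | smul c C _ hC => simp [hC]

theorem re_trace_mul_sub_eq_zero_of_measOf_eq {n : ℕ} {ι : Type*} [Fintype ι]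
    {G : ι → Matrix (Fin n) (Fin n) ℂ} {X X' : Matrix (Fin n) (Fin n) ℂ}
    (h : measOf G X = measOf G X') (i : ι) : (G i * (X - X')).trace.re = 0 := by
  simpa [measOf, mul_sub] using congrArg (fun v => v i) (sub_eq_zero.2 h)

theorem stmt5 {n r : ℕ} (hrn : r ≤ (n + 1) / 2 - 1)
    {ι₀ : Type*} [Fintype ι₀] (G0 : ι₀ → Matrix (Fin n) (Fin n) ℂ)
    (hG0mem : ∀ i, G0 i ∈ CrnSet n r)
    (hG0indep : LinearIndependent ℝ G0)
    (hG0span : ∀ X ∈ CrnSet n r, X ∈ Submodule.span ℝ (Set.range G0))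
    (A A' : (k : ℕ) → Matrix (Fin (gam n k)) (Fin r) ℝ)
    (hA : ∀ k, 2 * r - 1 ≤ k → k ≤ 2 * (n - r) - 1 → TotallyNonSingular (A k))
    (hA' : ∀ k, 2 * r - 1 ≤ k → k ≤ 2 * (n - r) - 1 → TotallyNonSingular (A' k)) :
    rComplete (measOf (fun idx : ι₀ ⊕ Fin (2 * n - 4 * r + 1) × Fin r × Bool =>
      match idx with
      | Sum.inl i => G0 i
      | Sum.inr (a, l, false) =>
          iota n (2 * r - 1 + (a : ℕ)) (fun j => ((A (2 * r - 1 + (a : ℕ)) j l : ℝ) : ℂ))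
      | Sum.inr (a, l, true) =>
          iota n (2 * r - 1 + (a : ℕ))
            (fun j => Complex.I * ((A' (2 * r - 1 + (a : ℕ)) j l : ℝ) : ℂ)))) r ∧
    Fintype.card (ι₀ ⊕ Fin (2 * n - 4 * r + 1) × Fin r × Bool) =
      4 * r * (n - r) + n - 2 * r := by
  have h2r : 2 * r ≤ n := by omega
  have hspan := span_eq_hermitianWithZeros_inBand hG0mem hG0span
  refine ⟨fun X X' hX hXr hX' hne hM => ?_,
    card_measurement_index h2r (hspan ▸ finrank_span_eq_card hG0indep).symm⟩
  have hperp := re_trace_mul_sub_eq_zero_of_measOf_eq hM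
  have hY : (X - X').IsHermitian := hX.1.sub hX'.1
  have hband : ∀ i j, ¬ InBand n r i j → (X - X') i j = 0 := fun i j =>
    hY.eq_zero_of_re_trace_mul_eq_zero (fun _ _ => InBand.symm) fun C hC =>
      re_trace_mul_eq_zero_of_mem_span (by rintro _ ⟨i, rfl⟩; exact hperp (.inl i)) (hspan ▸ hC)
  obtain ⟨k, hk₁, hk₂, hmin, i₀, hi₀⟩ := exists_first_antidiag_inBand hY (sub_ne_zero.2 hne) hband
  obtain ⟨a, rfl⟩ : ∃ a : Fin (2 * n - 4 * r + 1), 2 * r - 1 + (a : ℕ) = k :=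
    ⟨⟨k - (2 * r - 1), by omega⟩, by simp only; omega⟩
  have hsupp := lt_card_support_of_vecMul_re_im (hA _ hk₁ hk₂) (hA' _ hk₁ hk₂)
    (fun h => hi₀ (congrFun h i₀))
    (vecMul_re_antidiag_eq_zero hY fun l => hperp (.inr (a, l, false)))
    (vecMul_im_antidiag_eq_zero hY fun l => hperp (.inr (a, l, true)))
  have := card_support_antidiag_le_rank hX.1 hX' hmin
  omega
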